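/- arXiv:2209.02826 — 3 statements merged into one kernel-verified Lean document; each statement's English description precedes it below -/
import Mathlib

section
/- Let φ : ℝ^d → ℝ be strictly convex and differentiable with Bregman divergence d_φ(x, μ) = φ(x) − φ(μ) − ⟨∇φ(μ), x − μ⟩. Let P be a probability measure on ℝ^d such that the identity map is P-integrable and φ is P-integrable, and let m = ∫ x dP(x) be the barycenter of P. Then for every s ∈ ℝ^d such that x ↦ d_φ(x, s) is P-integrable, ∫ d_φ(x, s) dP(x) = ∫ d_φ(x, m) dP(x) + d_φ(m, s). Consequently, ∫ d_φ(x, s) dP(x) ≥ ∫ d_φ(x, m) dP(x), with equality if and only if s = m; i.e., the mean m uniquely minimizes the expected Bregman divergence s ↦ E[d_φ(X, s)]. -/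
/-!
Since `d_φ(x, s) - φ x` is affine in `x`, averaging over `P` gives
`∫ d_φ(x, s) dP = ∫ φ dP - φ s - ⟪∇φ s, m - s⟫`; subtracting the case `s = m` leaves exactly
`d_φ(m, s)`. On the line through `s` and `m`, strict convexity makes the tangent inequality
strict, so `d_φ(m, s) > 0` unless `m = s`.
-/

open MeasureTheory
open scoped RealInnerProductSpace

theorem StrictConvexOn.comp_affineMap {𝕜 E F β : Type*} [Field 𝕜] [LinearOrder 𝕜]
    [IsStrictOrderedRing 𝕜] [AddCommGroup E] [AddCommGroup F] [Module 𝕜 E] [Module 𝕜 F]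
    [AddCommMonoid β] [PartialOrder β] [SMul 𝕜 β] {f : F → β} {s : Set F}
    (hf : StrictConvexOn 𝕜 s f) (g : E →ᵃ[𝕜] F) (hg : Function.Injective g) :
    StrictConvexOn 𝕜 (g ⁻¹' s) (f ∘ g) :=
  ⟨hf.1.affine_preimage _, fun x hx y hy hxy a b ha hb hab =>
    calc
      (f ∘ g) (a • x + b • y) = f (a • g x + b • g y) := by
        rw [Function.comp_apply, Convex.combo_affine_apply hab]
      _ < a • f (g x) + b • f (g y) := hf.2 hx hy (hg.ne hxy) ha hb hab⟩

theorem StrictConvexOn.apply_sub_lt_sub_of_hasFDerivAt {E : Type*} [NormedAddCommGroup E]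
    [NormedSpace ℝ E] {f : E → ℝ} {f' : E →L[ℝ] ℝ} {s : Set E} {x y : E}
    (hf : StrictConvexOn ℝ s f) (hx : x ∈ s) (hy : y ∈ s) (hxy : x ≠ y)
    (hf' : HasFDerivAt f f' x) :
    f' (y - x) < f y - f x := by
  let ℓ : ℝ →ᵃ[ℝ] E := AffineMap.lineMap x y
  have hline := hf.comp_affineMap ℓ (AffineMap.lineMap_injective ℝ hxy)
  have hf'ℓ : HasFDerivAt f f' (ℓ 0) := by rwa [AffineMap.lineMap_apply_zero]
  have hderiv : HasDerivAt (f ∘ ℓ) (f' (y - x)) 0 :=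
    hf'ℓ.comp_hasDerivAt 0 AffineMap.hasDerivAt_lineMap
  have hslope := hline.lt_slope_of_hasDerivAt (x := 0) (y := 1) (by simpa [ℓ]) (by simpa [ℓ])
    one_pos hderiv
  simpa [slope_def_field, ℓ] using hslope

section Bregman

variable {E : Type*} [NormedAddCommGroup E] [InnerProductSpace ℝ E] [CompleteSpace E]

noncomputable def bregmanDiv (φ : E → ℝ) (x μ : E) : ℝ :=
  φ x - φ μ - ⟪gradient φ μ, x - μ⟫

variable {φ : E → ℝ}

@[simp]
theorem bregmanDiv_self (x : E) : bregmanDiv φ x x = 0 := by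
  simp [bregmanDiv]

theorem bregmanDiv_pos {s : Set E} (hφ : StrictConvexOn ℝ s φ) {x μ : E} (hx : x ∈ s)
    (hμ : μ ∈ s) (hne : x ≠ μ) (hdiff : DifferentiableAt ℝ φ μ) :
    0 < bregmanDiv φ x μ := by
  have htangent :=
    hφ.apply_sub_lt_sub_of_hasFDerivAt hμ hx hne.symm hdiff.hasGradientAt.hasFDerivAt
  simp only [InnerProductSpace.toDual_apply_apply] at htangent
  rw [bregmanDiv]
  linarith

theorem bregmanDiv_nonneg {s : Set E} (hφ : StrictConvexOn ℝ s φ) {x μ : E} (hx : x ∈ s)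
    (hμ : μ ∈ s) (hdiff : DifferentiableAt ℝ φ μ) :
    0 ≤ bregmanDiv φ x μ := by
  rcases eq_or_ne x μ with rfl | hne
  · simp
  · exact (bregmanDiv_pos hφ hx hμ hne hdiff).le

theorem bregmanDiv_eq_zero_iff {s : Set E} (hφ : StrictConvexOn ℝ s φ) {x μ : E} (hx : x ∈ s)
    (hμ : μ ∈ s) (hdiff : DifferentiableAt ℝ φ μ) :
    bregmanDiv φ x μ = 0 ↔ x = μ := by
  refine ⟨fun h => ?_, fun h => h ▸ bregmanDiv_self x⟩
  by_contra hne
  exact (bregmanDiv_pos hφ hx hμ hne hdiff).ne' h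

variable [MeasurableSpace E] {P : Measure E} [IsProbabilityMeasure P]

theorem integral_bregmanDiv (hid : Integrable (fun x => x) P) (hφ : Integrable φ P) (μ : E) :
    ∫ x, bregmanDiv φ x μ ∂P = (∫ x, φ x ∂P) - φ μ - ⟪gradient φ μ, (∫ x, x ∂P) - μ⟫ := by
  have hsub : Integrable (fun x => x - μ) P := hid.sub (integrable_const μ)
  have hφsub : Integrable (fun x => φ x - φ μ) P := hφ.sub (integrable_const _)
  simp only [bregmanDiv]
  rw [integral_sub hφsub (hsub.const_inner _), integral_inner hsub,
    integral_sub hφ (integrable_const _), integral_sub hid (integrable_const μ)]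
  simp

theorem integral_bregmanDiv_eq_integral_bregmanDiv_integral_add (hid : Integrable (fun x => x) P)
    (hφ : Integrable φ P) (s : E) :
    ∫ x, bregmanDiv φ x s ∂P =
      (∫ x, bregmanDiv φ x (∫ x, x ∂P) ∂P) + bregmanDiv φ (∫ x, x ∂P) s := by
  rw [integral_bregmanDiv hid hφ, integral_bregmanDiv hid hφ, bregmanDiv]
  simp only [sub_self, inner_zero_right]
  ring

end Bregman

/-- The mean uniquely minimizes the expected Bregman divergence: for a probability
measure `P` with barycenter `m`, `∫ d_φ(x, s) dP = ∫ d_φ(x, m) dP + d_φ(m, s)`,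
hence `s ↦ ∫ d_φ(x, s) dP` is minimized exactly at `s = m`. -/
theorem bregman_mean_minimizer (d : ℕ)
    (φ : EuclideanSpace ℝ (Fin d) → ℝ)
    (hconv : StrictConvexOn ℝ Set.univ φ)
    (hdiff : Differentiable ℝ φ)
    (D : EuclideanSpace ℝ (Fin d) → EuclideanSpace ℝ (Fin d) → ℝ)
    (hD : ∀ x μ, D x μ = φ x - φ μ - ⟪gradient φ μ, x - μ⟫)
    (P : Measure (EuclideanSpace ℝ (Fin d))) [IsProbabilityMeasure P]
    (hid : Integrable (fun x => x) P)
    (hφint : Integrable φ P)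
    (m : EuclideanSpace ℝ (Fin d)) (hm : m = ∫ x, x ∂P) :
    ∀ s : EuclideanSpace ℝ (Fin d), Integrable (fun x => D x s) P →
      (∫ x, D x s ∂P = (∫ x, D x m ∂P) + D m s) ∧
      ((∫ x, D x m ∂P) ≤ ∫ x, D x s ∂P) ∧
      ((∫ x, D x s ∂P = ∫ x, D x m ∂P) ↔ s = m) := by
  intro s _
  obtain rfl : D = bregmanDiv φ := funext₂ hD
  have hsplit := integral_bregmanDiv_eq_integral_bregmanDiv_integral_add hid hφint s
  rw [← hm] at hsplit
  have hnonneg := bregmanDiv_nonneg hconv (Set.mem_univ m) (Set.mem_univ s) (hdiff s)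
  refine ⟨hsplit, by linarith, ?_⟩
  rw [hsplit, add_eq_left,
    bregmanDiv_eq_zero_iff hconv (Set.mem_univ m) (Set.mem_univ s) (hdiff s), eq_comm]
end

section
/- Let (Ω, 𝓕, ℙ) be a probability space and let (x_n)_{n≥0} be a sequence of independent, identically distributed random vectors x_n : Ω → ℝ^d. Let f : ℝ^d → ℝ be a bounded measurable function, and let (α_n)_{n≥0} be a sequence of real step sizes with 0 < α_n ≤ 1 for all n, ∑_n α_n = ∞, and ∑_n α_n² < ∞. Define the stochastic approximation iterates ρ_0 ∈ ℝ and ρ_{n+1} = ρ_n + α_n ( f(x_n) − ρ_n ). Then ρ_n converges almost surely to E[f(x_0)]. -/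
open MeasureTheory Filter ProbabilityTheory
open scoped ENNReal NNReal

/-- Deterministic stochastic-approximation lemma: if `0 < αₙ ≤ 1`, `∑ αₙ = ∞`, and the
partial sums `∑_{k<n} αₖ ξₖ` converge, then the recursion
`e_{n+1} = (1-αₙ) eₙ + αₙ ξₙ` tends to `0`. -/
lemma rm_det_lemma (α ξ : ℕ → ℝ) (hα0 : ∀ n, 0 < α n) (hα1 : ∀ n, α n ≤ 1)
    (hdiv : ¬ Summable α)
    (hconv : ∃ L, Tendsto (fun n => ∑ k ∈ Finset.range n, α k * ξ k) atTop (nhds L))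
    (e : ℕ → ℝ) (hrec : ∀ n, e (n + 1) = (1 - α n) * e n + α n * ξ n) :
    Tendsto e atTop (nhds 0) := by
  set s : ℕ → ℝ := fun n => ∑ k ∈ Finset.range n, α k * ξ k with hs
  obtain ⟨L, hL⟩ := hconv
  have hcauchy : CauchySeq s := hL.cauchySeq
  rw [Metric.tendsto_atTop]
  intro ε hε
  obtain ⟨N, hN⟩ := Metric.cauchySeq_iff'.1 hcauchy (ε / 3) (by linarith)
  -- the product of (1 - α j) over [N, n)
  set p : ℕ → ℝ := fun n => ∏ j ∈ Finset.Ico N n, (1 - α j) with hp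
  have hp0 : ∀ n, 0 ≤ p n := fun n =>
    Finset.prod_nonneg fun j _ => by linarith [hα1 j]
  have hple : ∀ n, p n ≤ 1 := fun n =>
    Finset.prod_le_one (fun j _ => by linarith [hα1 j]) (fun j _ => by linarith [hα0 j]) |>.trans
      le_rfl
  -- key inductive bound
  have key : ∀ n, N ≤ n → |e n - (s n - s N)| ≤ |e N| * p n + ε / 3 * (1 - p n) := by
    intro n hn
    induction n, hn using Nat.le_induction with
    | base =>
      simp [hp, sub_self, Finset.Ico_self]
    | succ n hn ih =>
      have hsn : |s n - s N| ≤ ε / 3 := by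
        have := hN n hn
        rw [Real.dist_eq] at this
        linarith
      have hpsucc : p (n + 1) = p n * (1 - α n) := by
        show (∏ j ∈ Finset.Ico N (n + 1), (1 - α j)) = (∏ j ∈ Finset.Ico N n, (1 - α j)) * _
        rw [Finset.prod_Ico_succ_top hn]
      have hstep : e (n + 1) - (s (n + 1) - s N)
          = (1 - α n) * (e n - (s n - s N)) - α n * (s n - s N) := by
        have hssucc : s (n + 1) = s n + α n * ξ n := by
          simp [hs, Finset.sum_range_succ]
        rw [hrec n, hssucc]; ring
      have h1 : 0 ≤ 1 - α n := by linarith [hα1 n]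
      calc |e (n + 1) - (s (n + 1) - s N)|
          ≤ (1 - α n) * |e n - (s n - s N)| + α n * |s n - s N| := by
            rw [hstep]
            refine (abs_sub _ _).trans ?_
            rw [abs_mul, abs_mul, abs_of_nonneg h1, abs_of_nonneg (hα0 n).le]
        _ ≤ (1 - α n) * (|e N| * p n + ε / 3 * (1 - p n)) + α n * (ε / 3) := by
            have := (hα0 n).le
            gcongr
        _ = |e N| * (p n * (1 - α n)) + ε / 3 * (1 - p n * (1 - α n)) := by ring
        _ = |e N| * p (n + 1) + ε / 3 * (1 - p (n + 1)) := by rw [hpsucc]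
  -- the product tends to 0
  have hptend : Tendsto p atTop (nhds 0) := by
    have hS : Tendsto (fun n => ∑ j ∈ Finset.range n, α j) atTop atTop :=
      (not_summable_iff_tendsto_nat_atTop_of_nonneg fun n => (hα0 n).le).1 hdiv
    have hIco : Tendsto (fun n => ∑ j ∈ Finset.Ico N n, α j) atTop atTop := by
      have heq : ∀ᶠ n in atTop, (∑ j ∈ Finset.range n, α j) - (∑ j ∈ Finset.range N, α j)
          = ∑ j ∈ Finset.Ico N n, α j := by
        filter_upwards [eventually_ge_atTop N] with n hn
        rw [Finset.sum_Ico_eq_sub _ hn]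
      exact Tendsto.congr' heq (hS.atTop_add tendsto_const_nhds)
    have hexp : Tendsto (fun n => Real.exp (-(∑ j ∈ Finset.Ico N n, α j))) atTop (nhds 0) :=
      Real.tendsto_exp_atBot.comp (tendsto_neg_atTop_atBot.comp hIco)
    refine squeeze_zero hp0 (fun n => ?_) hexp
    calc p n ≤ ∏ j ∈ Finset.Ico N n, Real.exp (-α j) :=
          Finset.prod_le_prod (fun j _ => by linarith [hα1 j])
            (fun j _ => by linarith [Real.add_one_le_exp (-α j)])
      _ = Real.exp (∑ j ∈ Finset.Ico N n, -α j) := (Real.exp_sum _ _).symm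
      _ = Real.exp (-(∑ j ∈ Finset.Ico N n, α j)) := by rw [Finset.sum_neg_distrib]
  -- conclude
  have hsmall : ∀ᶠ n in atTop, |e N| * p n < ε / 3 := by
    have h := hptend.const_mul (|e N|)
    rw [mul_zero] at h
    exact h.eventually (gt_mem_nhds (show (0:ℝ) < ε / 3 by linarith))
  obtain ⟨N₂, hN₂⟩ := (hsmall.and (eventually_ge_atTop N)).exists_forall_of_atTop
  refine ⟨N₂, fun n hn => ?_⟩
  obtain ⟨hsm, hge⟩ := hN₂ n hn
  have h1 := key n hge
  have h2 : |s n - s N| ≤ ε / 3 := by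
    have := hN n hge
    rw [Real.dist_eq] at this
    linarith
  have h3 : |e n| ≤ |e n - (s n - s N)| + |s n - s N| := by
    have := abs_sub_abs_le_abs_sub (e n) (s n - s N)
    calc |e n| = |(e n - (s n - s N)) + (s n - s N)| := by ring_nf
      _ ≤ |e n - (s n - s N)| + |s n - s N| := abs_add_le _ _
  rw [Real.dist_eq, sub_zero]
  have hp0n := hp0 n
  have : ε / 3 * (1 - p n) ≤ ε / 3 := by nlinarith
  calc |e n| ≤ (|e N| * p n + ε / 3 * (1 - p n)) + ε / 3 := by linarith
    _ < ε / 3 + ε / 3 + ε / 3 := by linarith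
    _ = ε := by ring


/-- Robbins–Monro mean estimation: for i.i.d. samples `xₙ`, a bounded measurable `f`,
and step sizes with `0 < αₙ ≤ 1`, `∑ αₙ = ∞`, `∑ αₙ² < ∞`, the iterates
`ρ_{n+1} = ρₙ + αₙ (f(xₙ) - ρₙ)` converge almost surely to `E[f(x₀)]`. -/
theorem robbins_monro_mean (d : ℕ)
    {Ω : Type*} [MeasurableSpace Ω] (P : Measure Ω) [IsProbabilityMeasure P]
    (x : ℕ → Ω → EuclideanSpace ℝ (Fin d))
    (hmeas : ∀ n, Measurable (x n))
    (hindep : iIndepFun x P)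
    (hident : ∀ n, IdentDistrib (x n) (x 0) P P)
    (f : EuclideanSpace ℝ (Fin d) → ℝ) (hf : Measurable f)
    (C : ℝ) (hbd : ∀ y, |f y| ≤ C)
    (α : ℕ → ℝ) (hα0 : ∀ n, 0 < α n) (hα1 : ∀ n, α n ≤ 1)
    (hdiv : ¬ Summable α) (hsq : Summable fun n => (α n) ^ 2)
    (ρ : ℕ → Ω → ℝ) (ρ₀ : ℝ) (h0 : ∀ ω, ρ 0 ω = ρ₀)
    (hrec : ∀ n ω, ρ (n + 1) ω = ρ n ω + α n * (f (x n ω) - ρ n ω)) :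
    ∀ᵐ ω ∂P, Tendsto (fun n => ρ n ω) atTop (nhds (∫ ω', f (x 0 ω') ∂P)) := by
  classical
  set μ0 : ℝ := ∫ ω', f (x 0 ω') ∂P with hμ0
  have hC0 : 0 ≤ C := (abs_nonneg _).trans (hbd 0)
  set g : ℕ → Ω → ℝ := fun k ω => α k * (f (x k ω) - μ0) with hg
  have hgmeas : ∀ k, Measurable (g k) := fun k =>
    measurable_const.mul ((hf.comp (hmeas k)).sub measurable_const)
  have hgsm : ∀ k, StronglyMeasurable (g k) := fun k => (hgmeas k).stronglyMeasurable
  have hfint : ∀ k, Integrable (fun ω => f (x k ω)) P := fun k =>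
    (integrable_const C).mono' (hf.comp (hmeas k)).aestronglyMeasurable
      (Filter.Eventually.of_forall fun ω => by simpa [Real.norm_eq_abs] using hbd (x k ω))
  have hfid : ∀ k, ∫ ω', f (x k ω') ∂P = μ0 := fun k => ((hident k).comp hf).integral_eq
  have hμ0bd : |μ0| ≤ C := by
    rw [hμ0, ← Real.norm_eq_abs]
    calc ‖∫ ω', f (x 0 ω') ∂P‖ ≤ C * (P Set.univ).toReal :=
          norm_integral_le_of_norm_le_const
            (Filter.Eventually.of_forall fun ω => by
              simpa [Real.norm_eq_abs] using hbd (x 0 ω))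
      _ = C := by simp
  have hgbd : ∀ k ω, |g k ω| ≤ α k * (2 * C) := by
    intro k ω
    rw [hg]
    simp only
    rw [abs_mul, abs_of_nonneg (hα0 k).le]
    have h1 : |f (x k ω) - μ0| ≤ |f (x k ω)| + |μ0| := abs_sub _ _
    have h2 := hbd (x k ω)
    have := (hα0 k).le
    nlinarith
  have hgint : ∀ k, Integrable (g k) P := fun k =>
    (integrable_const (α k * (2 * C))).mono' (hgsm k).aestronglyMeasurable
      (Filter.Eventually.of_forall fun ω => by
        simpa [Real.norm_eq_abs] using hgbd k ω)
  have hgmem2 : ∀ k, MemLp (g k) 2 P := fun k =>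
    MemLp.of_bound (hgsm k).aestronglyMeasurable (α k * (2 * C))
      (Filter.Eventually.of_forall fun ω => by
        simpa [Real.norm_eq_abs] using hgbd k ω)
  have hgzero : ∀ k, ∫ ω', g k ω' ∂P = 0 := by
    intro k
    rw [hg]
    simp only
    rw [integral_const_mul, integral_sub (hfint k) (integrable_const _), hfid k, integral_const]
    simp
  have hgindep : iIndepFun g P :=
    hindep.comp (fun k y => α k * (f y - μ0))
      (fun k => measurable_const.mul (hf.sub measurable_const))
  set ℱ := Filtration.natural g hgsm with hℱ
  set M : ℕ → Ω → ℝ := fun n => ∑ k ∈ Finset.range (n + 1), g k with hM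
  have hMint : ∀ n, Integrable (M n) P := fun n =>
    integrable_finset_sum' _ fun k _ => hgint k
  have hMsm : ∀ n, StronglyMeasurable (M n) := fun n =>
    Finset.stronglyMeasurable_sum _ fun k _ => hgsm k
  have hmart : Martingale M ℱ P := by
    constructor
    · intro n
      refine Finset.stronglyMeasurable_sum _ fun k hk => ?_
      exact (Filtration.stronglyAdapted_natural hgsm k).mono
        (ℱ.mono (by simpa using Nat.lt_succ_iff.1 (Finset.mem_range.1 hk)))
    · intro i j hij
      have hsum : P[M j|ℱ i] =ᵐ[P] ∑ k ∈ Finset.range (j + 1), P[g k|ℱ i] :=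
        condExp_finsetSum (fun k _ => hgint k) _
      refine hsum.trans ?_
      have hterm : ∀ k ∈ Finset.range (j + 1),
          P[g k|ℱ i] =ᵐ[P] (if k ≤ i then g k else 0) := by
        intro k _
        by_cases hk : k ≤ i
        · rw [if_pos hk, condExp_of_stronglyMeasurable (ℱ.le i)
            ((Filtration.stronglyAdapted_natural hgsm k).mono (ℱ.mono hk)) (hgint k)]
        · rw [if_neg hk]
          refine (hgindep.condExp_natural_ae_eq_of_lt hgsm (not_le.1 hk)).trans ?_
          rw [hgzero k]
          rfl
      refine (eventuallyEq_sum hterm).trans ?_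
      have : (∑ k ∈ Finset.range (j + 1), if k ≤ i then g k else (0 : Ω → ℝ)) = M i := by
        rw [hM]
        simp only
        rw [← Finset.sum_filter]
        congr 1
        ext k
        simp only [Finset.mem_filter, Finset.mem_range]
        omega
      rw [this]
  set T : ℝ := ∑' n, (α n) ^ 2 with hT
  have hT0 : 0 ≤ T := tsum_nonneg fun n => sq_nonneg _
  have hTle : ∀ n, ∑ k ∈ Finset.range (n + 1), (α k) ^ 2 ≤ T := fun n =>
    Summable.sum_le_tsum (Finset.range (n + 1)) (fun k _ => sq_nonneg _) hsq
  have hMmean : ∀ n, ∫ ω', M n ω' ∂P = 0 := by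
    intro n
    rw [hM]
    simp only [Finset.sum_apply]
    rw [integral_finset_sum _ fun k _ => hgint k]
    exact Finset.sum_eq_zero fun k _ => hgzero k
  have hvar : ∀ n, variance (M n) P ≤ (2 * C) ^ 2 * T := by
    intro n
    rw [hM]
    simp only
    rw [IndepFun.variance_sum (fun k _ => hgmem2 k)
      (fun k _ l _ hkl => hgindep.indepFun hkl)]
    calc ∑ k ∈ Finset.range (n + 1), variance (g k) P
        ≤ ∑ k ∈ Finset.range (n + 1), (2 * C) ^ 2 * (α k) ^ 2 := by
          refine Finset.sum_le_sum fun k _ => ?_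
          refine (variance_le_expectation_sq (hgsm k).aestronglyMeasurable).trans ?_
          have : ∀ ω, (g k ω) ^ 2 ≤ (2 * C) ^ 2 * (α k) ^ 2 := by
            intro ω
            have h1 := hgbd k ω
            have h2 := abs_nonneg (g k ω)
            nlinarith [sq_abs (g k ω)]
          calc (∫ ω', (g k ω') ^ 2 ∂P) ≤ ∫ _ω', (2 * C) ^ 2 * (α k) ^ 2 ∂P := by
                refine integral_mono ((hgmem2 k).integrable_sq) (integrable_const _) ?_
                intro ω
                exact this ω
            _ = (2 * C) ^ 2 * (α k) ^ 2 := by simp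
      _ = (2 * C) ^ 2 * ∑ k ∈ Finset.range (n + 1), (α k) ^ 2 := by
          rw [Finset.mul_sum]
      _ ≤ (2 * C) ^ 2 * T := by
          have := hTle n
          nlinarith
  -- L¹ bound
  set R : ℝ≥0 := (Real.sqrt ((2 * C) ^ 2 * T)).toNNReal with hR
  have hbdd : ∀ n, eLpNorm (M n) 1 P ≤ (R : ℝ≥0∞) := by
    intro n
    refine (eLpNorm_le_eLpNorm_of_exponent_le one_le_two
      (hMsm n).aestronglyMeasurable).trans ?_
    have h2 : eLpNorm (M n) 2 P = evariance (M n) P ^ (1 / 2 : ℝ) := by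
      rw [eLpNorm_eq_lintegral_rpow_enorm_toReal two_ne_zero ENNReal.ofNat_ne_top, evariance]
      simp only [ENNReal.toReal_ofNat, one_div]
      congr 1
      refine lintegral_congr fun ω => ?_
      rw [hMmean n, sub_zero, ← ENNReal.rpow_natCast]
      norm_num
    rw [h2]
    have hM2 : MemLp (M n) 2 P := memLp_finset_sum' _ fun k _ => hgmem2 k
    have hev : evariance (M n) P ≤ ENNReal.ofReal ((2 * C) ^ 2 * T) := by
      rw [← hM2.ofReal_variance_eq]
      exact ENNReal.ofReal_le_ofReal (hvar n)
    calc evariance (M n) P ^ (1 / 2 : ℝ)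
        ≤ (ENNReal.ofReal ((2 * C) ^ 2 * T)) ^ (1 / 2 : ℝ) := by
          exact ENNReal.rpow_le_rpow hev (by norm_num)
      _ = (R : ℝ≥0∞) := by
          rw [hR, ENNReal.ofReal_rpow_of_nonneg (by positivity) (by norm_num),
            ← Real.sqrt_eq_rpow]
          rfl
  -- almost sure convergence of the martingale, and conclusion
  have hconv := hmart.submartingale.exists_ae_tendsto_of_bdd hbdd
  filter_upwards [hconv] with ω hω
  obtain ⟨c, hc⟩ := hω
  have hMc : Tendsto (fun n => ∑ k ∈ Finset.range (n + 1), α k * (f (x k ω) - μ0))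
      atTop (nhds c) := by
    refine hc.congr fun n => ?_
    rw [hM]
    simp [hg]
  have hs : Tendsto (fun n => ∑ k ∈ Finset.range n, α k * (f (x k ω) - μ0))
      atTop (nhds c) := (tendsto_add_atTop_iff_nat 1).1 hMc
  have hdet := rm_det_lemma α (fun k => f (x k ω) - μ0) hα0 hα1 hdiv ⟨c, hs⟩
    (fun n => ρ n ω - μ0) (by
      intro n
      show ρ (n + 1) ω - μ0 = (1 - α n) * (ρ n ω - μ0) + α n * (f (x n ω) - μ0)
      rw [hrec n ω]; ring)
  have hfinal := hdet.add_const μ0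
  rw [zero_add] at hfinal
  refine hfinal.congr fun n => ?_
  ring
end

section
/- Let (Ω, 𝓕, ℙ) be a probability space and let (x_n)_{n≥0} be a sequence of independent, identically distributed random vectors x_n : Ω → ℝ^d that are almost surely bounded (there is M with ‖x_n‖ ≤ M a.s.). Let f : ℝ^d → ℝ be measurable with 0 ≤ f(x) ≤ 1 for all x and E[f(x_0)] > 0. Let (α_n) satisfy 0 < α_n ≤ 1, ∑_n α_n = ∞, and ∑_n α_n² < ∞. Define ρ_0 ∈ (0, 1], σ_0 ∈ ℝ^d, and the coupled recursions ρ_{n+1} = ρ_n + α_n ( f(x_n) − ρ_n ) and σ_{n+1} = σ_n + α_n ( f(x_n)·x_n − σ_n ). Then almost surely (ρ_n, σ_n) → ( E[f(x_0)], E[f(x_0)·x_0] ), and consequently the ratio m_n = σ_n / ρ_n converges almost surely to E[f(x_0)·x_0] / E[f(x_0)]. -/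
open MeasureTheory Filter ProbabilityTheory

/-!
Both iterates are relaxation recursions `eₙ₊₁ = (1 - αₙ) eₙ + αₙ ξₙ` (exponential moving
averages) of independent, identically distributed, bounded samples `ξₙ` with mean `c`. The
partial sums of the centred noise `αₙ (ξₙ - c)` form a martingale whose second moments are
bounded by `C² ∑ αₙ²`, so the series `∑ αₙ (ξₙ - c)` converges almost surely (Kolmogorov's
one-series theorem; in finite dimension coordinatewise). Adding its tail `rₙ → 0` to `eₙ - c`
turns the recursion into one driven by the vanishing input `rₙ`, and since `∑ αₙ = ∞` the
products `∏ (1 - αₖ)` tend to `0`, which forces `eₙ → c`. The ratio converges because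
`E[f(x₀)] > 0`.
-/

section Relaxation

open Finset Topology

variable {E : Type*} [NormedAddCommGroup E] [NormedSpace ℝ E] {α : ℕ → ℝ}

theorem tendsto_prod_Ico_one_sub_of_not_summable (hα0 : ∀ n, 0 ≤ α n) (hα1 : ∀ n, α n ≤ 1)
    (hdiv : ¬ Summable α) (N : ℕ) :
    Tendsto (fun n => ∏ k ∈ Ico N n, (1 - α k)) atTop (𝓝 0) := by
  have hsum : Tendsto (fun n => ∑ k ∈ Ico N n, α k) atTop atTop := by
    have h := tendsto_atTop_add_const_right atTop (-∑ k ∈ range N, α k)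
      ((not_summable_iff_tendsto_nat_atTop_of_nonneg hα0).1 hdiv)
    refine h.congr' ?_
    filter_upwards [eventually_ge_atTop N] with n hn
    rw [sum_Ico_eq_sub _ hn, sub_eq_add_neg]
  refine squeeze_zero (fun n => prod_nonneg fun k _ => sub_nonneg.2 (hα1 k)) (fun n => ?_)
    (Real.tendsto_exp_atBot.comp (tendsto_neg_atTop_atBot.comp hsum))
  calc ∏ k ∈ Ico N n, (1 - α k) ≤ ∏ k ∈ Ico N n, Real.exp (-α k) :=
        prod_le_prod (fun k _ => sub_nonneg.2 (hα1 k))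
          (fun k _ => by linarith [Real.add_one_le_exp (-α k)])
    _ = Real.exp (-∑ k ∈ Ico N n, α k) := by rw [← sum_neg_distrib, Real.exp_sum]

theorem norm_le_add_prod_mul_norm_of_relaxation (hα0 : ∀ n, 0 ≤ α n) (hα1 : ∀ n, α n ≤ 1)
    {r z : ℕ → E} (hz : ∀ n, z (n + 1) = z n + α n • (r n - z n)) {N : ℕ} {c : ℝ}
    (hr : ∀ n ≥ N, ‖r n‖ ≤ c) :
    ∀ n ≥ N, ‖z n‖ ≤ c + (∏ k ∈ Ico N n, (1 - α k)) * ‖z N‖ := by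
  intro n hn
  induction n, hn using Nat.le_induction with
  | base => simpa using (norm_nonneg _).trans (hr N le_rfl)
  | succ n hn ih =>
    have h1α : 0 ≤ 1 - α n := sub_nonneg.2 (hα1 n)
    calc ‖z (n + 1)‖ = ‖(1 - α n) • z n + α n • r n‖ := by rw [hz n]; congr 1; module
      _ ≤ (1 - α n) * ‖z n‖ + α n * ‖r n‖ := by
        refine (norm_add_le _ _).trans_eq ?_
        rw [norm_smul, norm_smul, Real.norm_of_nonneg h1α, Real.norm_of_nonneg (hα0 n)]
      _ ≤ (1 - α n) * (c + (∏ k ∈ Ico N n, (1 - α k)) * ‖z N‖) + α n * c := by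
        gcongr
        · exact hα0 n
        · exact hr n hn
      _ = c + (∏ k ∈ Ico N (n + 1), (1 - α k)) * ‖z N‖ := by
        rw [prod_Ico_succ_top hn]; ring

theorem tendsto_zero_of_relaxation (hα0 : ∀ n, 0 ≤ α n) (hα1 : ∀ n, α n ≤ 1)
    (hdiv : ¬ Summable α) {r z : ℕ → E} (hr : Tendsto r atTop (𝓝 0))
    (hz : ∀ n, z (n + 1) = z n + α n • (r n - z n)) :
    Tendsto z atTop (𝓝 0) := by
  rw [tendsto_zero_iff_norm_tendsto_zero]
  refine tendsto_order.2 ⟨fun a ha => Eventually.of_forall fun n => ha.trans_le (norm_nonneg _),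
    fun ε hε => ?_⟩
  obtain ⟨N, hN⟩ := eventually_atTop.1 <|
    (tendsto_zero_iff_norm_tendsto_zero.1 hr).eventually (eventually_le_nhds (half_pos hε))
  have hprod := (tendsto_prod_Ico_one_sub_of_not_summable hα0 hα1 hdiv N).mul_const ‖z N‖
  rw [zero_mul] at hprod
  filter_upwards [eventually_ge_atTop N, hprod.eventually (eventually_lt_nhds (half_pos hε))]
    with n hn hsmall
  linarith [norm_le_add_prod_mul_norm_of_relaxation hα0 hα1 hz hN n hn]

theorem tendsto_of_relaxation_of_tendsto_sum (hα0 : ∀ n, 0 ≤ α n) (hα1 : ∀ n, α n ≤ 1)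
    (hdiv : ¬ Summable α) {ξ e : ℕ → E} {c T : E}
    (hT : Tendsto (fun n => ∑ k ∈ range n, α k • (ξ k - c)) atTop (𝓝 T))
    (he : ∀ n, e (n + 1) = e n + α n • (ξ n - e n)) :
    Tendsto e atTop (𝓝 c) := by
  set r : ℕ → E := fun n => T - ∑ k ∈ range n, α k • (ξ k - c) with hr_def
  have hr : Tendsto r atTop (𝓝 0) := by simpa using (tendsto_const_nhds (x := T)).sub hT
  -- adding the tail `r` of the series absorbs the noise `ξ - c` into a vanishing input
  have hz : Tendsto (fun n => e n - c + r n) atTop (𝓝 0) := by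
    refine tendsto_zero_of_relaxation hα0 hα1 hdiv hr fun n => ?_
    simp only [hr_def, he n, sum_range_succ]
    module
  simpa using (hz.sub hr).add_const c

end Relaxation

section Series

open Finset Topology

variable {Ω : Type*} [MeasurableSpace Ω] {P : Measure Ω} [IsProbabilityMeasure P]

theorem ProbabilityTheory.iIndepFun.martingale_sum_range_succ {E : Type*}
    [NormedAddCommGroup E] [NormedSpace ℝ E] [CompleteSpace E] [MeasurableSpace E] [BorelSpace E]
    [SecondCountableTopology E] {z : ℕ → Ω → E} (hsm : ∀ n, StronglyMeasurable (z n))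
    (hind : iIndepFun z P) (hint : ∀ n, Integrable (z n) P) (hzero : ∀ n, P[z n] = 0) :
    Martingale (fun n => ∑ k ∈ range (n + 1), z k) (Filtration.natural z hsm) P := by
  refine martingale_of_condExp_sub_eq_zero_nat (fun n => ?_)
    (fun n => integrable_finsetSum' _ fun k _ => hint k) (fun n => ?_)
  · exact stronglyMeasurable_sum _ fun k hk =>
      (Filtration.stronglyAdapted_natural hsm k).mono
        ((Filtration.natural z hsm).mono (Nat.lt_succ_iff.1 (mem_range.1 hk)))
  · rw [sum_range_succ _ (n + 1), add_sub_cancel_left]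
    exact (hind.condExp_natural_ae_eq_of_lt hsm n.lt_succ_self).trans
      (Eventually.of_forall fun _ => hzero (n + 1))

theorem eLpNorm_one_le_ofReal_sqrt_integral_sq {S : Ω → ℝ} (hS : MemLp S 2 P) :
    eLpNorm S 1 P ≤ ENNReal.ofReal √(∫ ω, S ω ^ 2 ∂P) := by
  refine (eLpNorm_le_eLpNorm_of_exponent_le one_le_two hS.1).trans_eq ?_
  rw [hS.eLpNorm_eq_integral_rpow_norm two_ne_zero ENNReal.ofNat_ne_top, Real.sqrt_eq_rpow]
  norm_num

theorem ae_exists_tendsto_sum_of_iIndepFun_of_summable_variance {z : ℕ → Ω → ℝ}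
    (hmeas : ∀ n, Measurable (z n)) (hind : iIndepFun z P) (hL2 : ∀ n, MemLp (z n) 2 P)
    (hzero : ∀ n, P[z n] = 0) (hvar : Summable fun n => Var[z n; P]) :
    ∀ᵐ ω ∂P, ∃ c, Tendsto (fun n => ∑ k ∈ range n, z k ω) atTop (𝓝 c) := by
  have hsm n := (hmeas n).stronglyMeasurable
  set S : ℕ → Ω → ℝ := fun n => ∑ k ∈ range (n + 1), z k
  have hmart : Martingale S (Filtration.natural z hsm) P :=
    hind.martingale_sum_range_succ hsm (fun n => (hL2 n).integrable one_le_two) hzero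
  have hL2S n : MemLp (S n) 2 P := memLp_finsetSum' _ fun k _ => hL2 k
  have hsecond n : ∫ ω, S n ω ^ 2 ∂P ≤ ∑' k, Var[z k; P] := by
    have hmean : P[S n] = 0 := by
      simp only [S, Finset.sum_apply]
      rw [integral_finsetSum _ fun k _ => (hL2 k).integrable one_le_two]
      simp [hzero]
    calc ∫ ω, S n ω ^ 2 ∂P = Var[S n; P] := by simp [variance_eq_sub (hL2S n), hmean]
      _ = ∑ k ∈ range (n + 1), Var[z k; P] :=
          IndepFun.variance_sum (fun k _ => hL2 k) fun k _ l _ hkl => hind.indepFun hkl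
      _ ≤ ∑' k, Var[z k; P] := hvar.sum_le_tsum _ fun k _ => variance_nonneg _ _
  have hbdd n : eLpNorm (S n) 1 P ≤ ENNReal.ofReal √(∑' k, Var[z k; P]) :=
    (eLpNorm_one_le_ofReal_sqrt_integral_sq (hL2S n)).trans
      (ENNReal.ofReal_le_ofReal (Real.sqrt_le_sqrt (hsecond n)))
  filter_upwards [hmart.submartingale.exists_ae_tendsto_of_bdd hbdd] with ω ⟨c, hc⟩
  exact ⟨c, (tendsto_add_atTop_iff_nat 1).1 (by simpa [S, Finset.sum_apply] using hc)⟩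

theorem ae_exists_tendsto_sum_mul_of_iIndepFun_of_bdd {y : ℕ → Ω → ℝ}
    (hmeas : ∀ n, Measurable (y n)) (hind : iIndepFun y P) {C : ℝ}
    (hbdd : ∀ n, ∀ᵐ ω ∂P, |y n ω| ≤ C) (hzero : ∀ n, P[y n] = 0) {α : ℕ → ℝ}
    (hsq : Summable fun n => α n ^ 2) :
    ∀ᵐ ω ∂P, ∃ c, Tendsto (fun n => ∑ k ∈ range n, α k * y k ω) atTop (𝓝 c) := by
  have hIcc n : ∀ᵐ ω ∂P, y n ω ∈ Set.Icc (-C) C := by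
    filter_upwards [hbdd n] with ω h using abs_le.1 h
  have hL2 n : MemLp (y n) 2 P := memLp_of_bounded (hIcc n) (hmeas n).aestronglyMeasurable 2
  have hvar n : Var[y n; P] ≤ C ^ 2 :=
    (variance_le_sq_of_bounded (hIcc n) (hmeas n).aemeasurable).trans_eq (by ring)
  refine ae_exists_tendsto_sum_of_iIndepFun_of_summable_variance (z := fun n ω => α n * y n ω)
    (fun n => (hmeas n).const_mul _) (hind.comp _ fun n => measurable_const_mul (α n))
    (fun n => (hL2 n).const_mul _) (fun n => by simp [integral_const_mul, hzero]) ?_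
  refine (hsq.mul_right (C ^ 2)).of_nonneg_of_le (fun n => variance_nonneg _ _) fun n => ?_
  rw [variance_const_mul]
  exact mul_le_mul_of_nonneg_left (hvar n) (sq_nonneg _)

section FiniteDimensional

variable {E : Type*} [NormedAddCommGroup E] [NormedSpace ℝ E] [FiniteDimensional ℝ E]
  [MeasurableSpace E] [BorelSpace E] {α : ℕ → ℝ}

theorem ae_exists_tendsto_sum_smul_of_iIndepFun_of_bdd {y : ℕ → Ω → E}
    (hmeas : ∀ n, Measurable (y n)) (hind : iIndepFun y P) {C : ℝ}
    (hbdd : ∀ n, ∀ᵐ ω ∂P, ‖y n ω‖ ≤ C) (hzero : ∀ n, P[y n] = 0)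
    (hsq : Summable fun n => α n ^ 2) :
    ∀ᵐ ω ∂P, ∃ c, Tendsto (fun n => ∑ k ∈ range n, α k • y k ω) atTop (𝓝 c) := by
  let L := (Module.finBasis ℝ E).equivFunL
  let ℓ i : E →L[ℝ] ℝ :=
    (ContinuousLinearMap.proj (φ := fun _ => ℝ) i).comp L.toContinuousLinearMap
  have hcoord i : ∀ᵐ ω ∂P, ∃ c,
      Tendsto (fun n => ∑ k ∈ range n, α k * ℓ i (y k ω)) atTop (𝓝 c) := by
    refine ae_exists_tendsto_sum_mul_of_iIndepFun_of_bdd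
      (fun n => (ℓ i).continuous.measurable.comp (hmeas n))
      (hind.comp _ fun _ => (ℓ i).continuous.measurable) (C := ‖ℓ i‖ * C) (fun n => ?_)
      (fun n => ?_) hsq
    · filter_upwards [hbdd n] with ω h
      rw [← Real.norm_eq_abs]
      exact ((ℓ i).le_opNorm _).trans (mul_le_mul_of_nonneg_left h (norm_nonneg _))
    · simp only [Function.comp_def]
      rw [(ℓ i).integral_comp_comm (Integrable.of_bound (hmeas n).aestronglyMeasurable C (hbdd n)),
        hzero, map_zero]
  filter_upwards [ae_all_iff.2 hcoord] with ω hω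
  choose c hc using hω
  have hL : Tendsto (fun n => L (∑ k ∈ range n, α k • y k ω)) atTop (𝓝 c) :=
    tendsto_pi_nhds.2 fun i => by simpa [ℓ] using hc i
  exact ⟨L.symm c, by simpa only [Function.comp_def, ContinuousLinearEquiv.symm_apply_apply]
    using (L.symm.continuous.tendsto c).comp hL⟩

variable {S : Type*} [MeasurableSpace S] {x : ℕ → Ω → S} {g : S → E} {C : ℝ}

theorem ae_exists_tendsto_sum_smul_sub_integral_of_identDistrib (hmeas : ∀ n, Measurable (x n))
    (hind : iIndepFun x P) (hident : ∀ n, IdentDistrib (x n) (x 0) P P) (hg : Measurable g)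
    (hbdd : ∀ n, ∀ᵐ ω ∂P, ‖g (x n ω)‖ ≤ C) (hsq : Summable fun n => α n ^ 2) :
    ∀ᵐ ω ∂P, ∃ c, Tendsto (fun n => ∑ k ∈ range n, α k • (g (x k ω) - ∫ ω', g (x 0 ω') ∂P))
      atTop (𝓝 c) := by
  set μ := ∫ ω', g (x 0 ω') ∂P
  refine ae_exists_tendsto_sum_smul_of_iIndepFun_of_bdd (y := fun n ω => g (x n ω) - μ)
    (fun n => (hg.comp (hmeas n)).sub_const μ) (hind.comp _ fun _ => hg.sub_const μ)
    (C := C + ‖μ‖) (fun n => ?_) (fun n => ?_) hsq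
  · filter_upwards [hbdd n] with ω h
    exact (norm_sub_le _ _).trans (by linarith)
  · have hmean : ∫ ω, g (x n ω) ∂P = μ := ((hident n).comp hg).integral_eq
    have hint : Integrable (fun ω => g (x n ω)) P :=
      .of_bound (hg.comp (hmeas n)).aestronglyMeasurable C (hbdd n)
    simp [integral_sub hint (integrable_const μ), hmean]

theorem ae_tendsto_integral_of_relaxation (hmeas : ∀ n, Measurable (x n))
    (hind : iIndepFun x P) (hident : ∀ n, IdentDistrib (x n) (x 0) P P) (hg : Measurable g)
    (hbdd : ∀ n, ∀ᵐ ω ∂P, ‖g (x n ω)‖ ≤ C) (hα0 : ∀ n, 0 ≤ α n) (hα1 : ∀ n, α n ≤ 1)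
    (hdiv : ¬ Summable α) (hsq : Summable fun n => α n ^ 2) {e : ℕ → Ω → E}
    (he : ∀ n ω, e (n + 1) ω = e n ω + α n • (g (x n ω) - e n ω)) :
    ∀ᵐ ω ∂P, Tendsto (fun n => e n ω) atTop (𝓝 (∫ ω', g (x 0 ω') ∂P)) := by
  filter_upwards [ae_exists_tendsto_sum_smul_sub_integral_of_identDistrib hmeas hind hident hg
    hbdd hsq] with ω ⟨T, hT⟩
  exact tendsto_of_relaxation_of_tendsto_sum hα0 hα1 hdiv hT fun n => he n ω

end FiniteDimensional

end Series

theorem oda_learning_rule_general (d : ℕ)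
    {Ω : Type*} [MeasurableSpace Ω] (P : Measure Ω) [IsProbabilityMeasure P]
    (x : ℕ → Ω → EuclideanSpace ℝ (Fin d))
    (hmeas : ∀ n, Measurable (x n))
    (hindep : iIndepFun x P)
    (hident : ∀ n, IdentDistrib (x n) (x 0) P P)
    (M : ℝ) (hbdd : ∀ n, ∀ᵐ ω ∂P, ‖x n ω‖ ≤ M)
    (f : EuclideanSpace ℝ (Fin d) → ℝ) (hf : Measurable f)
    (hf0 : ∀ y, 0 ≤ f y) (hf1 : ∀ y, f y ≤ 1)
    (hmean : 0 < ∫ ω', f (x 0 ω') ∂P)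
    (α : ℕ → ℝ) (hα0 : ∀ n, 0 < α n) (hα1 : ∀ n, α n ≤ 1)
    (hdiv : ¬ Summable α) (hsq : Summable fun n => (α n) ^ 2)
    (ρ : ℕ → Ω → ℝ) (σ : ℕ → Ω → EuclideanSpace ℝ (Fin d))
    (hrecρ : ∀ n ω, ρ (n + 1) ω = ρ n ω + α n * (f (x n ω) - ρ n ω))
    (hrecσ : ∀ n ω, σ (n + 1) ω = σ n ω + α n • (f (x n ω) • x n ω - σ n ω)) :
    ∀ᵐ ω ∂P,
      Tendsto (fun n => ρ n ω) atTop (nhds (∫ ω', f (x 0 ω') ∂P)) ∧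
      Tendsto (fun n => σ n ω) atTop (nhds (∫ ω', f (x 0 ω') • x 0 ω' ∂P)) ∧
      Tendsto (fun n => (ρ n ω)⁻¹ • σ n ω) atTop
        (nhds ((∫ ω', f (x 0 ω') ∂P)⁻¹ • ∫ ω', f (x 0 ω') • x 0 ω' ∂P)) := by
  have hfx n : ∀ᵐ ω ∂P, ‖f (x n ω)‖ ≤ 1 :=
    ae_of_all _ fun ω => (Real.norm_of_nonneg (hf0 _)).trans_le (hf1 _)
  have hfxx n : ∀ᵐ ω ∂P, ‖f (x n ω) • x n ω‖ ≤ M := by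
    filter_upwards [hbdd n] with ω h
    rw [norm_smul, Real.norm_of_nonneg (hf0 _)]
    exact (mul_le_of_le_one_left (norm_nonneg _) (hf1 _)).trans h
  have hα0' n := (hα0 n).le
  have hρ := ae_tendsto_integral_of_relaxation hmeas hindep hident hf hfx hα0' hα1 hdiv hsq hrecρ
  have hσ := ae_tendsto_integral_of_relaxation hmeas hindep hident (hf.smul measurable_id) hfxx
    hα0' hα1 hdiv hsq hrecσ
  filter_upwards [hρ, hσ] with ω hρ hσ
  exact ⟨hρ, hσ, (hρ.inv₀ hmean.ne').smul hσ⟩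

/-- Gradient-free online training rule (ODA): with a.s. bounded i.i.d. samples `xₙ`,
association weights `f ∈ [0,1]` with `E[f(x₀)] > 0`, and Robbins–Monro step sizes,
the coupled iterates `ρ_{n+1} = ρₙ + αₙ (f(xₙ) - ρₙ)`,
`σ_{n+1} = σₙ + αₙ (f(xₙ) • xₙ - σₙ)` converge a.s. to
`(E[f(x₀)], E[f(x₀) • x₀])`, and `mₙ = σₙ / ρₙ → E[f(x₀) • x₀] / E[f(x₀)]`. -/
theorem oda_learning_rule (d : ℕ)
    {Ω : Type*} [MeasurableSpace Ω] (P : Measure Ω) [IsProbabilityMeasure P]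
    (x : ℕ → Ω → EuclideanSpace ℝ (Fin d))
    (hmeas : ∀ n, Measurable (x n))
    (hindep : iIndepFun x P)
    (hident : ∀ n, IdentDistrib (x n) (x 0) P P)
    (M : ℝ) (hbdd : ∀ n, ∀ᵐ ω ∂P, ‖x n ω‖ ≤ M)
    (f : EuclideanSpace ℝ (Fin d) → ℝ) (hf : Measurable f)
    (hf0 : ∀ y, 0 ≤ f y) (hf1 : ∀ y, f y ≤ 1)
    (hmean : 0 < ∫ ω', f (x 0 ω') ∂P)
    (α : ℕ → ℝ) (hα0 : ∀ n, 0 < α n) (hα1 : ∀ n, α n ≤ 1)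
    (hdiv : ¬ Summable α) (hsq : Summable fun n => (α n) ^ 2)
    (ρ : ℕ → Ω → ℝ) (σ : ℕ → Ω → EuclideanSpace ℝ (Fin d))
    (ρ₀ : ℝ) (hρ₀ : 0 < ρ₀ ∧ ρ₀ ≤ 1) (σ₀ : EuclideanSpace ℝ (Fin d))
    (h0ρ : ∀ ω, ρ 0 ω = ρ₀) (h0σ : ∀ ω, σ 0 ω = σ₀)
    (hrecρ : ∀ n ω, ρ (n + 1) ω = ρ n ω + α n * (f (x n ω) - ρ n ω))
    (hrecσ : ∀ n ω, σ (n + 1) ω = σ n ω + α n • (f (x n ω) • x n ω - σ n ω)) :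
    ∀ᵐ ω ∂P,
      Tendsto (fun n => ρ n ω) atTop (nhds (∫ ω', f (x 0 ω') ∂P)) ∧
      Tendsto (fun n => σ n ω) atTop (nhds (∫ ω', f (x 0 ω') • x 0 ω' ∂P)) ∧
      Tendsto (fun n => (ρ n ω)⁻¹ • σ n ω) atTop
        (nhds ((∫ ω', f (x 0 ω') ∂P)⁻¹ • ∫ ω', f (x 0 ω') • x 0 ω' ∂P)) :=
  oda_learning_rule_general d P x hmeas hindep hident M hbdd f hf hf0 hf1 hmean α hα0 hα1 hdiv hsq ρ
    σ hrecρ hrecσ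
end
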